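/- arXiv:2405.17320 — 8 statements merged into one kernel-verified Lean document; each statement's English description precedes it below -/
import Mathlib

section
/- Let l ∈ ℕ and p_l(t) = t^(2l+1)·sin(1/t) for t ≠ 0, p_l(0) = 0. The function u(t) = exp(∫₀ᵗ p_l(s) ds) is the unique solution of u'(t) = p_l(t)·u(t) on [-1,1] with u(0) = 1, it is strictly positive on [-1,1], and u' vanishes at infinitely many points in any neighborhood of t = 0 while u' is not identically zero. -/
/-!
Since `p_l` is continuous, `t ↦ ∫₀ᵗ p_l` is a primitive of `p_l`, so `u` solves the equation and
is positive; for any other solution `v`, the product `v · exp (-∫₀ᵗ p_l)` has derivative zero,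
which gives uniqueness. As `u > 0`, `u' = p_l u` vanishes exactly where `p_l` does, in particular
at the points `1 / (nπ) → 0`, but not at `2 / π`, where `sin (1 / t) = 1`.
-/

open Real Set Filter Topology

theorem continuous_ite_pow_mul_sin_inv {n : ℕ} (hn : n ≠ 0) :
    Continuous fun t : ℝ => if t = 0 then 0 else t ^ n * sin (1 / t) := by
  refine continuous_iff_continuousAt.2 fun x => ?_
  rcases eq_or_ne x 0 with rfl | hx
  · have h_abs_pow : Tendsto (fun t : ℝ => |t| ^ n) (𝓝 0) (𝓝 0) :=
      (continuous_abs.pow n).tendsto' 0 0 (by simp [hn])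
    rw [ContinuousAt, if_pos rfl]
    refine squeeze_zero_norm (fun t => ?_) h_abs_pow
    split_ifs
    · simp
    · rw [norm_mul, norm_pow, Real.norm_eq_abs]
      exact mul_le_of_le_one_right (by positivity) (abs_sin_le_one _)
  · have h_ne : ContinuousAt (fun t : ℝ => t ^ n * sin (1 / t)) x := by
      fun_prop (disch := exact hx)
    refine h_ne.congr ?_
    filter_upwards [isOpen_ne.mem_nhds hx] with t ht
    rw [if_neg ht]

theorem hasDerivAt_exp_integral {p : ℝ → ℝ} (hp : Continuous p) (x₀ t : ℝ) :
    HasDerivAt (fun t => exp (∫ s in x₀..t, p s)) (p t * exp (∫ s in x₀..t, p s)) t := by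
  simpa only [mul_comm] using (hp.integral_hasStrictDerivAt x₀ t).hasDerivAt.exp

theorem eq_mul_exp_integral_of_hasDerivAt {p v : ℝ → ℝ} (hp : Continuous p) {a b x₀ : ℝ}
    (hx₀ : x₀ ∈ Icc a b) (hv : ∀ t ∈ Icc a b, HasDerivAt v (p t * v t) t) :
    ∀ t ∈ Icc a b, v t = v x₀ * exp (∫ s in x₀..t, p s) := by
  set F : ℝ → ℝ := fun t => ∫ s in x₀..t, p s
  set g : ℝ → ℝ := fun t => v t * exp (-F t)
  have hg_deriv : ∀ t ∈ Icc a b, HasDerivAt g 0 t := fun t ht =>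
    ((hv t ht).fun_mul (hp.integral_hasStrictDerivAt x₀ t).hasDerivAt.fun_neg.exp).congr_deriv
      (by ring)
  have hg_const : ∀ t ∈ Icc a b, g t = g a :=
    constant_of_has_deriv_right_zero (fun t ht => (hg_deriv t ht).continuousAt.continuousWithinAt)
      fun t ht => (hg_deriv t (Ico_subset_Icc_self ht)).hasDerivWithinAt
  intro t ht
  have hg_eq : v t * exp (-F t) = v x₀ := by
    simpa [g, F] using (hg_const t ht).trans (hg_const x₀ hx₀).symm
  rw [← hg_eq, mul_assoc, ← exp_add, neg_add_cancel, exp_zero, mul_one]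

theorem infinite_setOf_sin_inv_eq_zero {ε : ℝ} (hε : 0 < ε) :
    {t ∈ Ioo 0 ε | sin (1 / t) = 0}.Infinite := by
  set f : ℕ → ℝ := fun n => 1 / ((n + 1 : ℕ) * π)
  have hf_pos : ∀ n, 0 < f n := fun n => by positivity
  have hf_inj : Function.Injective f := fun m n hmn => by
    simpa [f, pi_ne_zero] using hmn
  have hf_tendsto : Tendsto f atTop (𝓝 0) := by
    have h := tendsto_one_div_add_atTop_nhds_zero_nat.div_const π
    rw [zero_div] at h
    exact h.congr fun n => by simp [f]; ring
  have hf_mem : ∀ᶠ n in atTop, f n ∈ {t ∈ Ioo 0 ε | sin (1 / t) = 0} :=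
    (hf_tendsto.eventually (Iio_mem_nhds hε)).mono fun n hn =>
      ⟨⟨hf_pos n, hn⟩, by simp only [f, one_div_one_div, sin_nat_mul_pi]⟩
  exact (Nat.frequently_atTop_iff_infinite.1 hf_mem.frequently).image hf_inj.injOn
    |>.mono (image_subset_iff.2 fun _ hn => hn)

theorem stmt_1 (l : ℕ)
    (p : ℝ → ℝ)
    (hp : ∀ t : ℝ, p t = if t = 0 then 0 else t ^ (2 * l + 1) * Real.sin (1 / t))
    (u : ℝ → ℝ)
    (hu : ∀ t : ℝ, u t = Real.exp (∫ s in (0:ℝ)..t, p s)) :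
    (∀ t ∈ Set.Icc (-1:ℝ) 1, HasDerivAt u (p t * u t) t) ∧
    u 0 = 1 ∧
    (∀ v : ℝ → ℝ, (∀ t ∈ Set.Icc (-1:ℝ) 1, HasDerivAt v (p t * v t) t) → v 0 = 1 →
      ∀ t ∈ Set.Icc (-1:ℝ) 1, v t = u t) ∧
    (∀ t ∈ Set.Icc (-1:ℝ) 1, 0 < u t) ∧
    (∀ ε : ℝ, 0 < ε → {t ∈ Set.Ioo (-ε) ε | deriv u t = 0}.Infinite) ∧
    ¬ (∀ t ∈ Set.Icc (-1:ℝ) 1, deriv u t = 0) := by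
  have hp_cont : Continuous p := by
    rw [funext hp]
    exact continuous_ite_pow_mul_sin_inv (by omega)
  have hu_deriv : ∀ t, HasDerivAt u (p t * u t) t := by
    rw [funext hu]
    exact hasDerivAt_exp_integral hp_cont 0
  have hu_pos : ∀ t, 0 < u t := fun t => by rw [hu]; exact exp_pos _
  refine ⟨fun t _ => hu_deriv t, by simp [hu], fun v hv hv0 t ht => ?_, fun t _ => hu_pos t,
    fun ε hε => ?_, fun h => ?_⟩
  · rw [eq_mul_exp_integral_of_hasDerivAt hp_cont (x₀ := 0) (by norm_num) hv t ht, hv0, one_mul,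
      hu]
  · refine (infinite_setOf_sin_inv_eq_zero hε).mono ?_
    rintro t ⟨⟨ht0, htε⟩, hsin⟩
    refine ⟨⟨by linarith, htε⟩, ?_⟩
    rw [(hu_deriv t).deriv, hp, if_neg ht0.ne', hsin, mul_zero, zero_mul]
  · have h_two_div_pi : 2 / π ∈ Icc (-1 : ℝ) 1 :=
      ⟨by linarith [show 0 < 2 / π by positivity],
        (div_le_one pi_pos).2 (by linarith [pi_gt_three])⟩
    have h_zero := (hu_deriv _).deriv ▸ h _ h_two_div_pi
    rw [hp, if_neg (by positivity), one_div_div, sin_pi_div_two, mul_one] at h_zero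
    exact (mul_pos (by positivity) (hu_pos _)).ne' h_zero
end

section
/- Let I = [a,b], M₀ < M₁, and let G₀, G₁ : I × I → ℝ be continuous kernels satisfying the resolvent identity G₁(t,s) = G₀(t,s) + (M₀−M₁)·∫ₐᵇ G₀(t,r)G₁(r,s) dr for all (t,s). If G₀ ≥ 0 and G₁ ≥ 0 on I × I, then G₁(t,s) ≤ G₀(t,s) for all (t,s) ∈ I × I. -/
theorem stmt_5 (a b M₀ M₁ : ℝ) (hab : a < b) (hM : M₀ < M₁) (G₀ G₁ : ℝ → ℝ → ℝ)
    (hG₀ : ContinuousOn (fun q : ℝ × ℝ => G₀ q.1 q.2) (Set.Icc a b ×ˢ Set.Icc a b))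
    (hG₁ : ContinuousOn (fun q : ℝ × ℝ => G₁ q.1 q.2) (Set.Icc a b ×ˢ Set.Icc a b))
    (hres : ∀ t ∈ Set.Icc a b, ∀ s ∈ Set.Icc a b,
      G₁ t s = G₀ t s + (M₀ - M₁) * ∫ r in a..b, G₀ t r * G₁ r s)
    (hG₀pos : ∀ t ∈ Set.Icc a b, ∀ s ∈ Set.Icc a b, 0 ≤ G₀ t s)
    (hG₁pos : ∀ t ∈ Set.Icc a b, ∀ s ∈ Set.Icc a b, 0 ≤ G₁ t s) :
    ∀ t ∈ Set.Icc a b, ∀ s ∈ Set.Icc a b, G₁ t s ≤ G₀ t s := by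
  intro t ht s hs
  rw [hres t ht s hs]
  have hint : 0 ≤ ∫ r in a..b, G₀ t r * G₁ r s := by
    apply intervalIntegral.integral_nonneg hab.le
    intro r hr
    exact mul_nonneg (hG₀pos t ht r hr) (hG₁pos r hr s hs)
  nlinarith
end

section
/- Let I = [a,b], M₀ < M₁, and let G₀, G₁ : I × I → ℝ be continuous kernels satisfying G₁(t,s) = G₀(t,s) + (M₀−M₁)·∫ₐᵇ G₀(t,r)G₁(r,s) dr. Suppose G₀ ≥ 0 and G₁ ≥ 0 on I × I, and fix (t,s) ∈ (a,b)×(a,b). If G₀(t,·) > 0 except on a finite set and G₁(·,s) > 0 except on a finite set, then G₁(t,s) < G₀(t,s). -/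
open Set

/- The resolvent identity gives `G₀ t s - G₁ t s = (M₁ - M₀) ∫ₐᵇ G₀(t,r) G₁(r,s) dr`. The integrand
is continuous and nonnegative and vanishes only on the finite union of the zero sets of `G₀(t,·)`
and `G₁(·,s)`, so it is positive somewhere on `[a,b]` and its integral is positive. -/

theorem intervalIntegral_pos_of_nonneg_of_finite_zeros {f : ℝ → ℝ} {a b : ℝ} (hab : a < b)
    (hf : ContinuousOn f (Icc a b)) (hnn : ∀ x ∈ Icc a b, 0 ≤ f x)
    (hzeros : {x ∈ Icc a b | f x = 0}.Finite) : 0 < ∫ x in a..b, f x := by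
  obtain ⟨c, hc, hfc⟩ := ((Icc_infinite hab).sdiff hzeros).nonempty
  have hpos : 0 < f c := (hnn c hc).lt_of_ne' fun h => hfc ⟨hc, h⟩
  simpa using intervalIntegral.integral_lt_integral_of_continuousOn_of_le_of_exists_lt hab
    continuousOn_const hf (fun x hx => hnn x (Ioc_subset_Icc_self hx)) ⟨c, hc, hpos⟩

theorem stmt_6 (a b M₀ M₁ : ℝ) (hab : a < b) (hM : M₀ < M₁) (G₀ G₁ : ℝ → ℝ → ℝ)
    (hG₀ : ContinuousOn (fun q : ℝ × ℝ => G₀ q.1 q.2) (Set.Icc a b ×ˢ Set.Icc a b))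
    (hG₁ : ContinuousOn (fun q : ℝ × ℝ => G₁ q.1 q.2) (Set.Icc a b ×ˢ Set.Icc a b))
    (hres : ∀ t ∈ Set.Icc a b, ∀ s ∈ Set.Icc a b,
      G₁ t s = G₀ t s + (M₀ - M₁) * ∫ r in a..b, G₀ t r * G₁ r s)
    (hG₀pos : ∀ t ∈ Set.Icc a b, ∀ s ∈ Set.Icc a b, 0 ≤ G₀ t s)
    (hG₁pos : ∀ t ∈ Set.Icc a b, ∀ s ∈ Set.Icc a b, 0 ≤ G₁ t s)
    (t s : ℝ) (ht : t ∈ Set.Ioo a b) (hs : s ∈ Set.Ioo a b)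
    (hG₀t : {r ∈ Set.Icc a b | G₀ t r = 0}.Finite)
    (hG₁s : {r ∈ Set.Icc a b | G₁ r s = 0}.Finite) :
    G₁ t s < G₀ t s := by
  have htI : t ∈ Icc a b := Ioo_subset_Icc_self ht
  have hsI : s ∈ Icc a b := Ioo_subset_Icc_self hs
  have hcont : ContinuousOn (fun r => G₀ t r * G₁ r s) (Icc a b) :=
    (hG₀.comp (continuousOn_const.prodMk continuousOn_id) fun r hr => mk_mem_prod htI hr).mul
      (hG₁.comp (continuousOn_id.prodMk continuousOn_const) fun r hr => mk_mem_prod hr hsI)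
  have hzeros : {r ∈ Icc a b | G₀ t r * G₁ r s = 0}.Finite :=
    (hG₀t.union hG₁s).subset fun r ⟨hr, h⟩ => (mul_eq_zero.mp h).imp (⟨hr, ·⟩) (⟨hr, ·⟩)
  have hint : 0 < ∫ r in a..b, G₀ t r * G₁ r s :=
    intervalIntegral_pos_of_nonneg_of_finite_zeros hab hcont
      (fun r hr => mul_nonneg (hG₀pos t htI r hr) (hG₁pos r hr s hsI)) hzeros
  rw [hres t htI s hsI]
  linarith [mul_neg_of_neg_of_pos (sub_neg.mpr hM) hint]
end

section
/- For M ∈ ℝ with M ≠ 0, define g_M : [0,1]×[0,1] → ℝ by g_M(t,s) = (1 − e^{Ms})/M if s ≤ t and g_M(t,s) = e^{Ms}(e^{−Mt} − 1)/M if t < s. Then for each fixed s ∈ (0,1], the function t ↦ g_M(t,s) is continuous on [0,1], satisfies g_M(0,s) = 0, and g_M(t,s) < 0 for all (t,s) ∈ (0,1] × (0,1]. -/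
private lemma gM_key (M s t : ℝ) :
    (if s ≤ t then (1 - Real.exp (M * s)) / M
      else Real.exp (M * s) * (Real.exp (-(M * t)) - 1) / M) =
    Real.exp (M * s) * (Real.exp (-(M * min t s)) - 1) / M := by
  split_ifs with h
  · rw [min_eq_right h]
    have h1 : Real.exp (M * s) * Real.exp (-(M * s)) = 1 := by
      rw [← Real.exp_add]; norm_num
    congr 1
    linear_combination -h1
  · rw [min_eq_left (le_of_lt (lt_of_not_ge h))]

private lemma gM_neg (M : ℝ) (hM : M ≠ 0) {x : ℝ} (hx : 0 < x) :
    (Real.exp (-(M * x)) - 1) / M < 0 := by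
  rcases hM.lt_or_gt with h | h
  · apply div_neg_of_pos_of_neg _ h
    have : (0:ℝ) < -(M * x) := by nlinarith
    nlinarith [Real.exp_lt_exp.mpr this, Real.exp_zero]
  · apply div_neg_of_neg_of_pos _ h
    have : -(M * x) < 0 := by nlinarith
    nlinarith [Real.exp_lt_exp.mpr this, Real.exp_zero]

theorem stmt_9 (M : ℝ) (hM : M ≠ 0) (g : ℝ → ℝ → ℝ)
    (hg : ∀ t s : ℝ, g t s =
      if s ≤ t then (1 - Real.exp (M * s)) / M
      else Real.exp (M * s) * (Real.exp (-(M * t)) - 1) / M) :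
    (∀ s ∈ Set.Ioc (0:ℝ) 1, ContinuousOn (fun t => g t s) (Set.Icc 0 1) ∧ g 0 s = 0) ∧
    (∀ t ∈ Set.Ioc (0:ℝ) 1, ∀ s ∈ Set.Ioc (0:ℝ) 1, g t s < 0) := by
  have hg' : ∀ t s : ℝ, g t s = Real.exp (M * s) * (Real.exp (-(M * min t s)) - 1) / M := by
    intro t s; rw [hg t s, gM_key]
  constructor
  · intro s hs
    constructor
    · have : ContinuousOn (fun t => Real.exp (M * s) * (Real.exp (-(M * min t s)) - 1) / M)
          (Set.Icc (0:ℝ) 1) := by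
        apply Continuous.continuousOn
        exact (continuous_const.mul ((Real.continuous_exp.comp
          ((continuous_const.mul (continuous_id.min continuous_const)).neg)).sub
          continuous_const)).div_const M
      exact this.congr (fun t _ => hg' t s)
    · rw [hg' 0 s, min_eq_left hs.1.le]
      simp
  · intro t ht s hs
    rw [hg' t s, mul_div_assoc]
    exact mul_neg_of_pos_of_neg (Real.exp_pos _)
      (gM_neg M hM (lt_min ht.1 hs.1))
end

section
/- For M ≠ 0 let g_M(t,s) = (1 − e^{Ms})/M for 0 ≤ s ≤ t ≤ 1 and g_M(t,s) = e^{Ms}(e^{−Mt} − 1)/M for 0 ≤ t < s ≤ 1, and let g_0(t,s) = −min(s,t). Then for every fixed (t,s) ∈ (0,1] × (0,1], the map M ↦ g_M(t,s) (with value g_0(t,s) at M = 0) is strictly decreasing on ℝ. -/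
open intervalIntegral Real Set

lemma integ_exp_mul (M a b : ℝ) (hM : M ≠ 0) :
    ∫ u in a..b, Real.exp (M * u) = (Real.exp (M * b) - Real.exp (M * a)) / M := by
  have h : ∀ u ∈ Set.uIcc a b, HasDerivAt (fun u => Real.exp (M * u) / M)
      (Real.exp (M * u)) u := by
    intro u _
    have : HasDerivAt (fun u => Real.exp (M * u)) (Real.exp (M * u) * M) u :=
      (Real.hasDerivAt_exp (M * u)).comp u (by simpa using (hasDerivAt_id u).const_mul M)
    simpa [mul_div_assoc, mul_div_cancel_right₀ _ hM] using this.div_const M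
  have := intervalIntegral.integral_eq_sub_of_hasDerivAt h
    (Continuous.intervalIntegrable (by continuity) a b)
  rw [this]; ring

lemma strictAnti_neg_integ (a b : ℝ) (ha : 0 ≤ a) (hab : a < b) :
    StrictAnti (fun M => -(∫ u in a..b, Real.exp (M * u))) := by
  intro M₁ M₂ hM
  have : (∫ u in a..b, Real.exp (M₁ * u)) < ∫ u in a..b, Real.exp (M₂ * u) := by
    apply intervalIntegral.integral_lt_integral_of_continuousOn_of_le_of_exists_lt hab
      (by fun_prop) (by fun_prop)
    · intro x hx
      exact Real.exp_le_exp.2 (mul_le_mul_of_nonneg_right hM.le (ha.trans hx.1.le))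
    · exact ⟨b, Set.right_mem_Icc.2 hab.le,
        Real.exp_lt_exp.2 (mul_lt_mul_of_pos_right hM (ha.trans_lt hab))⟩
  simp only []
  linarith

theorem stmt_10 (g : ℝ → ℝ → ℝ → ℝ)
    (hg : ∀ M t s : ℝ, M ≠ 0 → g M t s =
      if s ≤ t then (1 - Real.exp (M * s)) / M
      else Real.exp (M * s) * (Real.exp (-(M * t)) - 1) / M)
    (hg0 : ∀ t s : ℝ, g 0 t s = -min s t) :
    ∀ t ∈ Set.Ioc (0:ℝ) 1, ∀ s ∈ Set.Ioc (0:ℝ) 1,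
      StrictAnti (fun M => g M t s) := by
  intro t ht s hs
  by_cases hst : s ≤ t
  · have key : (fun M => g M t s) = fun M => -(∫ u in (0:ℝ)..s, Real.exp (M * u)) := by
      funext M
      by_cases hM : M = 0
      · subst hM
        simp [hg0, min_eq_left hst]
      · rw [hg M t s hM, if_pos hst, integ_exp_mul M 0 s hM]
        rw [mul_zero, Real.exp_zero]; ring
    rw [key]
    exact strictAnti_neg_integ 0 s le_rfl hs.1
  · have key : (fun M => g M t s) = fun M => -(∫ u in (s-t)..s, Real.exp (M * u)) := by
      funext M
      by_cases hM : M = 0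
      · subst hM
        simp [hg0, min_eq_right (le_of_not_ge hst)]
      · rw [hg M t s hM, if_neg hst, integ_exp_mul M (s-t) s hM]
        rw [show M * (s - t) = M * s + -(M * t) by ring, Real.exp_add]
        field_simp
        ring
    rw [key]
    exact strictAnti_neg_integ (s-t) s (by linarith [le_of_not_ge hst]) (by linarith [ht.1])
end

section
/- For M ≠ 0, the kernel g_M(t,s) (Green's function of u''+Mu'=σ, u(0)=u'(1)=0) satisfies: for every continuous σ : [0,1] → ℝ, the function u(t) = ∫₀¹ g_M(t,s)σ(s) ds is twice continuously differentiable on [0,1] and satisfies u''(t) + M·u'(t) = σ(t) for all t ∈ [0,1], with u(0) = 0 and u'(1) = 0. -/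
/-!
Extend `σ` continuously to `ℝ` by clamping. For `t ∈ [0, 1]`, splitting the integral at `s = t`
gives `u t = ∫₀ᵗ (1 - e^{Ms})/M σ + (e^{-Mt} - 1)/M ∫ₜ¹ e^{Ms} σ`, whose derivative is
`u' t = -e^{-Mt} ∫ₜ¹ e^{Ms} σ`; differentiating once more gives `u'' = σ - M u'`.
At the endpoints the two-sided derivative comes from gluing with the explicit form of `u` outside
`[0, 1]`: for `t ≤ 0` only the second branch of the kernel occurs, and for `t ≥ 1` `u` is constant.
-/

open Set Real intervalIntegral

noncomputable def greenKernel (M t s : ℝ) : ℝ :=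
  if s ≤ t then (1 - exp (M * s)) / M
  else exp (M * s) * (exp (-(M * t)) - 1) / M

namespace greenKernel

variable {M t s : ℝ}

theorem eq_of_ge (h : s ≤ t) : greenKernel M t s = (1 - exp (M * s)) / M := if_pos h

/-- The two branches agree on the diagonal, so the second one may be used for `t ≤ s`. -/
theorem eq_of_le (h : t ≤ s) : greenKernel M t s = exp (M * s) * (exp (-(M * t)) - 1) / M := by
  unfold greenKernel
  split_ifs with hst
  · obtain rfl := le_antisymm hst h
    rw [mul_sub, ← exp_add]
    simp
  · rfl

end greenKernel

section

variable {M : ℝ} {σ : ℝ → ℝ}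

theorem integral_greenKernel_mul_of_nonpos {τ : ℝ} (hτ : τ ≤ 0) :
    ∫ s in (0:ℝ)..1, greenKernel M τ s * σ s =
      (exp (-(M * τ)) - 1) / M * ∫ s in (0:ℝ)..1, exp (M * s) * σ s := by
  rw [← integral_const_mul]
  refine integral_congr fun s hs => ?_
  rw [uIcc_of_le zero_le_one] at hs
  rw [greenKernel.eq_of_le (hτ.trans hs.1)]
  ring

theorem integral_greenKernel_mul_of_one_le {τ : ℝ} (hτ : 1 ≤ τ) :
    ∫ s in (0:ℝ)..1, greenKernel M τ s * σ s = ∫ s in (0:ℝ)..1, (1 - exp (M * s)) / M * σ s := by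
  refine integral_congr fun s hs => ?_
  rw [uIcc_of_le zero_le_one] at hs
  rw [greenKernel.eq_of_ge (hs.2.trans hτ)]

theorem integral_greenKernel_mul_of_mem_Icc (hσ : Continuous σ) {τ : ℝ} (hτ : τ ∈ Icc 0 1) :
    ∫ s in (0:ℝ)..1, greenKernel M τ s * σ s =
      (∫ s in (0:ℝ)..τ, (1 - exp (M * s)) / M * σ s) +
        (exp (-(M * τ)) - 1) / M * ∫ s in τ..1, exp (M * s) * σ s := by
  have hleft : EqOn (fun s => greenKernel M τ s * σ s) (fun s => (1 - exp (M * s)) / M * σ s)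
      (uIcc 0 τ) := fun s hs => by
    rw [uIcc_of_le hτ.1] at hs
    simp only [greenKernel.eq_of_ge hs.2]
  have hright : EqOn (fun s => greenKernel M τ s * σ s)
      (fun s => (exp (-(M * τ)) - 1) / M * (exp (M * s) * σ s)) (uIcc τ 1) := fun s hs => by
    rw [uIcc_of_le hτ.2] at hs
    simp only [greenKernel.eq_of_le hs.1]
    ring
  have hint_left :
      IntervalIntegrable (fun s => greenKernel M τ s * σ s) MeasureTheory.volume 0 τ :=
    (ContinuousOn.congr (by fun_prop) hleft).intervalIntegrable
  have hint_right :
      IntervalIntegrable (fun s => greenKernel M τ s * σ s) MeasureTheory.volume τ 1 :=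
    (ContinuousOn.congr (by fun_prop) hright).intervalIntegrable
  rw [← integral_add_adjacent_intervals hint_left hint_right, integral_congr hleft,
    integral_congr hright, integral_const_mul]

theorem hasDerivAt_integral_exp_mul_left (hσ : Continuous σ) (t : ℝ) :
    HasDerivAt (fun τ => ∫ s in τ..1, exp (M * s) * σ s) (-(exp (M * t) * σ t)) t :=
  have hf : Continuous fun s => exp (M * s) * σ s := by fun_prop
  integral_hasDerivAt_left (hf.intervalIntegrable _ _) (hf.stronglyMeasurableAtFilter _ _)
    hf.continuousAt

theorem hasDerivAt_exp_neg_mul (M t : ℝ) :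
    HasDerivAt (fun τ => exp (-(M * τ))) (-M * exp (-(M * t))) t := by
  simpa [mul_comm] using ((hasDerivAt_id t).const_mul M).neg.exp

theorem hasDerivAt_exp_neg_mul_sub_one_div (hM : M ≠ 0) (t : ℝ) :
    HasDerivAt (fun τ => (exp (-(M * τ)) - 1) / M) (-exp (-(M * t))) t :=
  (((hasDerivAt_exp_neg_mul M t).sub_const 1).div_const M).congr_deriv (by field_simp)

end

/-- The derivative of `t ↦ ∫ s in 0..1, greenKernel M t s * σ s` on `[0, 1]`. -/
noncomputable def greenSolutionDeriv (M : ℝ) (σ : ℝ → ℝ) (t : ℝ) : ℝ :=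
  -exp (-(M * t)) * ∫ s in t..1, exp (M * s) * σ s

namespace greenSolutionDeriv

variable {M : ℝ} {σ : ℝ → ℝ}

theorem apply_one : greenSolutionDeriv M σ 1 = 0 := by
  simp [greenSolutionDeriv]

theorem hasDerivAt (hσ : Continuous σ) (t : ℝ) :
    HasDerivAt (greenSolutionDeriv M σ) (σ t - M * greenSolutionDeriv M σ t) t := by
  refine ((hasDerivAt_exp_neg_mul M t).neg.mul
    (hasDerivAt_integral_exp_mul_left hσ t)).congr_deriv ?_
  simp only [greenSolutionDeriv, Pi.neg_apply, exp_neg]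
  field_simp
  ring

end greenSolutionDeriv

section

variable {M : ℝ} {σ : ℝ → ℝ}

theorem hasDerivAt_greenSolution_formula (hM : M ≠ 0) (hσ : Continuous σ) (t : ℝ) :
    HasDerivAt (fun τ => (∫ s in (0:ℝ)..τ, (1 - exp (M * s)) / M * σ s) +
        (exp (-(M * τ)) - 1) / M * ∫ s in τ..1, exp (M * s) * σ s)
      (greenSolutionDeriv M σ t) t := by
  have hf : Continuous fun s => (1 - exp (M * s)) / M * σ s := by fun_prop
  refine ((hf.integral_hasStrictDerivAt 0 t).hasDerivAt.add
    ((hasDerivAt_exp_neg_mul_sub_one_div hM t).mul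
      (hasDerivAt_integral_exp_mul_left hσ t))).congr_deriv ?_
  simp only [greenSolutionDeriv, exp_neg]
  field_simp
  ring

theorem hasDerivAt_integral_greenKernel_mul (hM : M ≠ 0) (hσ : Continuous σ) {t : ℝ}
    (ht : t ∈ Icc 0 1) :
    HasDerivAt (fun τ => ∫ s in (0:ℝ)..1, greenKernel M τ s * σ s)
      (greenSolutionDeriv M σ t) t := by
  have hIcc : HasDerivWithinAt (fun τ => ∫ s in (0:ℝ)..1, greenKernel M τ s * σ s)
      (greenSolutionDeriv M σ t) (Icc 0 1) t :=
    (hasDerivAt_greenSolution_formula hM hσ t).hasDerivWithinAt.congr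
      (fun τ hτ => integral_greenKernel_mul_of_mem_Icc hσ hτ)
      (integral_greenKernel_mul_of_mem_Icc hσ ht)
  rcases ht.1.eq_or_lt with rfl | h0
  · have hleft : HasDerivWithinAt (fun τ => ∫ s in (0:ℝ)..1, greenKernel M τ s * σ s)
        (greenSolutionDeriv M σ 0) (Iic 0) 0 := by
      refine (((hasDerivAt_exp_neg_mul_sub_one_div hM 0).mul_const _).congr_deriv ?_)
        |>.hasDerivWithinAt.congr (fun τ hτ => integral_greenKernel_mul_of_nonpos hτ)
          (integral_greenKernel_mul_of_nonpos le_rfl)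
      simp [greenSolutionDeriv]
    simpa using hleft.union (hIcc.mono_of_mem_nhdsWithin (Icc_mem_nhdsGE zero_lt_one))
  rcases ht.2.eq_or_lt with rfl | h1
  · have hright : HasDerivWithinAt (fun τ => ∫ s in (0:ℝ)..1, greenKernel M τ s * σ s)
        (greenSolutionDeriv M σ 1) (Ici 1) 1 := by
      rw [greenSolutionDeriv.apply_one]
      exact (hasDerivWithinAt_const _ _ _).congr
        (fun τ hτ => integral_greenKernel_mul_of_one_le hτ)
        (integral_greenKernel_mul_of_one_le le_rfl)
    simpa using (hIcc.mono_of_mem_nhdsWithin (Icc_mem_nhdsLE zero_lt_one)).union hright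
  exact hIcc.hasDerivAt (Icc_mem_nhds h0 h1)

end

theorem stmt_12 (M : ℝ) (hM : M ≠ 0) (g : ℝ → ℝ → ℝ)
    (hg : ∀ t s : ℝ, g t s =
      if s ≤ t then (1 - Real.exp (M * s)) / M
      else Real.exp (M * s) * (Real.exp (-(M * t)) - 1) / M)
    (σ : ℝ → ℝ) (hσ : ContinuousOn σ (Set.Icc 0 1)) :
    ∃ u' u'' : ℝ → ℝ,
      (∀ t ∈ Set.Icc (0:ℝ) 1,
        HasDerivAt (fun τ => ∫ s in (0:ℝ)..1, g τ s * σ s) (u' t) t) ∧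
      (∀ t ∈ Set.Icc (0:ℝ) 1, HasDerivAt u' (u'' t) t) ∧
      ContinuousOn u' (Set.Icc 0 1) ∧
      ContinuousOn u'' (Set.Icc 0 1) ∧
      (∀ t ∈ Set.Icc (0:ℝ) 1, u'' t + M * u' t = σ t) ∧
      (∫ s in (0:ℝ)..1, g 0 s * σ s) = 0 ∧
      u' 1 = 0 := by
  obtain rfl : g = greenKernel M := funext₂ hg
  set σ' : ℝ → ℝ := IccExtend zero_le_one ((Icc 0 1).domRestrict σ)
  have hσ' : Continuous σ' := continuous_IccExtend_iff.mpr hσ.domRestrict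
  have hσσ' : EqOn σ' σ (Icc 0 1) := fun s hs => IccExtend_of_mem _ _ hs
  have hu : (fun τ => ∫ s in (0:ℝ)..1, greenKernel M τ s * σ s) =
      fun τ => ∫ s in (0:ℝ)..1, greenKernel M τ s * σ' s := by
    funext τ
    refine integral_congr fun s hs => ?_
    rw [uIcc_of_le zero_le_one] at hs
    simp only [hσσ' hs]
  have hu' : Continuous (greenSolutionDeriv M σ') :=
    continuous_iff_continuousAt.mpr fun t => (greenSolutionDeriv.hasDerivAt hσ' t).continuousAt
  refine ⟨greenSolutionDeriv M σ', fun t => σ' t - M * greenSolutionDeriv M σ' t,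
    fun t ht => hu ▸ hasDerivAt_integral_greenKernel_mul hM hσ' ht,
    fun t _ => greenSolutionDeriv.hasDerivAt hσ' t, hu'.continuousOn, by fun_prop,
    fun t ht => by rw [← hσσ' ht]; ring, ?_, greenSolutionDeriv.apply_one⟩
  rw [congrFun hu 0, integral_greenKernel_mul_of_nonpos le_rfl]
  simp
end

section
/- Let M < π²/4 with M ≠ 0 and let g_M be the Green's function of u'' + M u = σ on [0,1] with u(0) = u'(1) = 0 (for M > 0: g_M(t,s) = −sin(√M·t)cos(√M(1−s))/(√M·cos√M) for t ≤ s and symmetric-type formula for t ≥ s; for M < 0 with hyperbolic functions). Then g_M(t,s) < 0 for all (t,s) ∈ (0,1] × (0,1]. -/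
theorem stmt_14 (M : ℝ) (hM : M < Real.pi ^ 2 / 4) (hM0 : M ≠ 0) (g : ℝ → ℝ → ℝ)
    (hgpos : 0 < M → ∀ t s : ℝ, g t s =
      if t ≤ s then
        -(Real.sin (Real.sqrt M * t) * Real.cos (Real.sqrt M * (1 - s))) /
          (Real.sqrt M * Real.cos (Real.sqrt M))
      else
        -(Real.sin (Real.sqrt M * s) * Real.cos (Real.sqrt M * (1 - t))) /
          (Real.sqrt M * Real.cos (Real.sqrt M)))
    (hgneg : M < 0 → ∀ t s : ℝ, g t s =
      if t ≤ s then
        -(Real.sinh (Real.sqrt (-M) * t) * Real.cosh (Real.sqrt (-M) * (1 - s))) /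
          (Real.sqrt (-M) * Real.cosh (Real.sqrt (-M)))
      else
        -(Real.sinh (Real.sqrt (-M) * s) * Real.cosh (Real.sqrt (-M) * (1 - t))) /
          (Real.sqrt (-M) * Real.cosh (Real.sqrt (-M)))) :
    ∀ t ∈ Set.Ioc (0:ℝ) 1, ∀ s ∈ Set.Ioc (0:ℝ) 1, g t s < 0 := by
  intro t ht s hs
  obtain ⟨ht0, ht1⟩ := ht
  obtain ⟨hs0, hs1⟩ := hs
  rcases hM0.lt_or_gt with hneg | hpos
  · -- M < 0 : hyperbolic case
    have hr : 0 < Real.sqrt (-M) := Real.sqrt_pos.mpr (by linarith)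
    have key : ∀ a b : ℝ, 0 < a → a ≤ 1 → 0 < b → b ≤ 1 →
        -(Real.sinh (Real.sqrt (-M) * a) * Real.cosh (Real.sqrt (-M) * (1 - b))) /
          (Real.sqrt (-M) * Real.cosh (Real.sqrt (-M))) < 0 := by
      intro a b ha0 _ _ _
      apply div_neg_of_neg_of_pos
      · have h1 : 0 < Real.sinh (Real.sqrt (-M) * a) :=
          Real.sinh_pos_iff.mpr (by positivity)
        have h2 : 0 < Real.cosh (Real.sqrt (-M) * (1 - b)) := Real.cosh_pos _
        nlinarith
      · exact mul_pos hr (Real.cosh_pos _)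
    rw [hgneg hneg]
    split_ifs
    · exact key t s ht0 ht1 hs0 hs1
    · exact key s t hs0 hs1 ht0 ht1
  · -- 0 < M : trigonometric case
    have hr0 : 0 < Real.sqrt M := Real.sqrt_pos.mpr hpos
    have hrlt : Real.sqrt M < Real.pi / 2 := by
      have : Real.sqrt M < Real.sqrt (Real.pi ^ 2 / 4) :=
        Real.sqrt_lt_sqrt hpos.le hM
      have heq : Real.sqrt (Real.pi ^ 2 / 4) = Real.pi / 2 := by
        rw [show Real.pi ^ 2 / 4 = (Real.pi / 2) ^ 2 by ring]
        exact Real.sqrt_sq (by positivity)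
      linarith [heq ▸ this]
    have hcos : ∀ y : ℝ, 0 ≤ y → y ≤ 1 → 0 < Real.cos (Real.sqrt M * y) := by
      intro y hy0 hy1
      apply Real.cos_pos_of_mem_Ioo
      constructor
      · nlinarith [Real.pi_pos]
      · nlinarith
    have key : ∀ a b : ℝ, 0 < a → a ≤ 1 → 0 < b → b ≤ 1 →
        -(Real.sin (Real.sqrt M * a) * Real.cos (Real.sqrt M * (1 - b))) /
          (Real.sqrt M * Real.cos (Real.sqrt M)) < 0 := by
      intro a b ha0 ha1 hb0 hb1
      apply div_neg_of_neg_of_pos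
      · have h1 : 0 < Real.sin (Real.sqrt M * a) := by
          apply Real.sin_pos_of_pos_of_lt_pi (by positivity)
          nlinarith [Real.pi_pos]
        have h2 : 0 < Real.cos (Real.sqrt M * (1 - b)) :=
          hcos (1 - b) (by linarith) (by linarith)
        nlinarith
      · exact mul_pos hr0 (by simpa using hcos 1 zero_le_one le_rfl)
    rw [hgpos hpos]
    split_ifs
    · exact key t s ht0 ht1 hs0 hs1
    · exact key s t hs0 hs1 ht0 ht1
end

section
/- Let I = [a,b], M₀ < M₁, G₀, G₁ continuous kernels on I × I with G₁(t,s) = G₀(t,s) + (M₀−M₁)∫ₐᵇ G₀(t,r)G₁(r,s) dr. Fix (t,s) ∈ (a,b)². Suppose G₁(·,s) ≥ 0 on I, G₁(r,s) > 0 for all r in (s,b] outside a finite set, G₁(r,s) = 0 for r ∈ [a,s), and G₀(t,·) ≥ 0 on I with G₀(t,r) = 0 for r ∈ (t,b] and G₀(t,r) > 0 for r ∈ [a,t) outside a finite set. If t > s then G₁(t,s) < G₀(t,s), while if t < s then G₁(t,s) = G₀(t,s) = 0. -/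
/-!
By the resolvent identity, `G₁ t s - G₀ t s = (M₀ - M₁) ∫ₐᵇ G₀(t,r) G₁(r,s) dr` with `M₀ - M₁ < 0`.
The integrand is nonnegative, and positive on `(s, t)` off the finite set `F₀ ∪ F₁`; a finite set
is null, so for `s < t` the integral is positive. For `t < s` both kernels vanish at `(t, s)`
by the support hypotheses alone.
-/

open Set MeasureTheory

theorem intervalIntegral_pos_of_pos_on_Ioo_diff_finite {f : ℝ → ℝ} {a b u v : ℝ}
    (hfi : IntervalIntegrable f volume a b) (hnonneg : ∀ x ∈ Ioc a b, 0 ≤ f x)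
    {F : Set ℝ} (hF : F.Finite) (hpos : ∀ x ∈ Ioo u v \ F, 0 < f x)
    (hau : a ≤ u) (huv : u < v) (hvb : v ≤ b) :
    0 < ∫ x in a..b, f x := by
  have hab : a < b := hau.trans_lt (huv.trans_le hvb)
  have hf : 0 ≤ᵐ[volume.restrict (uIoc a b)] f := by
    rw [uIoc_of_le hab.le]
    exact (ae_restrict_iff' measurableSet_Ioc).2 (.of_forall hnonneg)
  have hsupp : Ioo u v \ F ⊆ Function.support f ∩ Ioc a b := fun x hx =>
    ⟨(hpos x hx).ne', hau.trans_lt hx.1.1, hx.1.2.le.trans hvb⟩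
  rw [intervalIntegral.integral_pos_iff_support_of_nonneg_ae' hf hfi]
  refine ⟨hab, lt_of_lt_of_le ?_ (measure_mono hsupp)⟩
  rw [measure_sdiff_null (hF.measure_zero volume)]
  exact (Measure.measure_Ioo_pos _).2 huv

theorem stmt_18_general (a b M₀ M₁ : ℝ) (hM : M₀ < M₁) (G₀ G₁ : ℝ → ℝ → ℝ)
    (hG₀ : ContinuousOn (fun q : ℝ × ℝ => G₀ q.1 q.2) (Set.Icc a b ×ˢ Set.Icc a b))
    (hG₁ : ContinuousOn (fun q : ℝ × ℝ => G₁ q.1 q.2) (Set.Icc a b ×ˢ Set.Icc a b))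
    (hres : ∀ t' ∈ Set.Icc a b, ∀ s' ∈ Set.Icc a b,
      G₁ t' s' = G₀ t' s' + (M₀ - M₁) * ∫ r in a..b, G₀ t' r * G₁ r s')
    (t s : ℝ) (ht : t ∈ Set.Ioo a b) (hs : s ∈ Set.Ioo a b)
    (hG₁nonneg : ∀ r ∈ Set.Icc a b, 0 ≤ G₁ r s)
    (F₁ : Set ℝ) (hF₁ : F₁.Finite)
    (hG₁posafter : ∀ r ∈ Set.Ioc s b, r ∉ F₁ → 0 < G₁ r s)
    (hG₁zerobefore : ∀ r ∈ Set.Ico a s, G₁ r s = 0)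
    (hG₀nonneg : ∀ r ∈ Set.Icc a b, 0 ≤ G₀ t r)
    (hG₀zeroafter : ∀ r ∈ Set.Ioc t b, G₀ t r = 0)
    (F₀ : Set ℝ) (hF₀ : F₀.Finite)
    (hG₀posbefore : ∀ r ∈ Set.Ico a t, r ∉ F₀ → 0 < G₀ t r) :
    (s < t → G₁ t s < G₀ t s) ∧
    (t < s → G₁ t s = 0 ∧ G₀ t s = 0) := by
  refine ⟨fun hst => ?_, fun hts => ⟨hG₁zerobefore t ⟨ht.1.le, hts⟩, hG₀zeroafter s ⟨hts, hs.2.le⟩⟩⟩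
  have htI : t ∈ Icc a b := Ioo_subset_Icc_self ht
  have hsI : s ∈ Icc a b := Ioo_subset_Icc_self hs
  have hint : IntervalIntegrable (fun r => G₀ t r * G₁ r s) volume a b := by
    refine ContinuousOn.intervalIntegrable ?_
    rw [uIcc_of_le (ht.1.trans ht.2).le]
    exact (hG₀.comp (continuousOn_const.prodMk continuousOn_id) fun r hr => ⟨htI, hr⟩).mul
      (hG₁.comp (continuousOn_id.prodMk continuousOn_const) fun r hr => ⟨hr, hsI⟩)
  have hpos : 0 < ∫ r in a..b, G₀ t r * G₁ r s := by
    refine intervalIntegral_pos_of_pos_on_Ioo_diff_finite hint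
      (fun r hr => mul_nonneg (hG₀nonneg r (Ioc_subset_Icc_self hr))
        (hG₁nonneg r (Ioc_subset_Icc_self hr)))
      (hF₀.union hF₁) (fun r ⟨hr, hrF⟩ => mul_pos ?_ ?_) hs.1.le hst ht.2.le
    · exact hG₀posbefore r ⟨hs.1.le.trans hr.1.le, hr.2⟩ fun h => hrF (.inl h)
    · exact hG₁posafter r ⟨hr.1, hr.2.le.trans ht.2.le⟩ fun h => hrF (.inr h)
  rw [hres t htI s hsI]
  linarith [mul_neg_of_neg_of_pos (sub_neg.2 hM) hpos]

theorem stmt_18 (a b M₀ M₁ : ℝ) (hab : a < b) (hM : M₀ < M₁) (G₀ G₁ : ℝ → ℝ → ℝ)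
    (hG₀ : ContinuousOn (fun q : ℝ × ℝ => G₀ q.1 q.2) (Set.Icc a b ×ˢ Set.Icc a b))
    (hG₁ : ContinuousOn (fun q : ℝ × ℝ => G₁ q.1 q.2) (Set.Icc a b ×ˢ Set.Icc a b))
    (hres : ∀ t' ∈ Set.Icc a b, ∀ s' ∈ Set.Icc a b,
      G₁ t' s' = G₀ t' s' + (M₀ - M₁) * ∫ r in a..b, G₀ t' r * G₁ r s')
    (t s : ℝ) (ht : t ∈ Set.Ioo a b) (hs : s ∈ Set.Ioo a b)
    (hG₁nonneg : ∀ r ∈ Set.Icc a b, 0 ≤ G₁ r s)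
    (F₁ : Set ℝ) (hF₁ : F₁.Finite)
    (hG₁posafter : ∀ r ∈ Set.Ioc s b, r ∉ F₁ → 0 < G₁ r s)
    (hG₁zerobefore : ∀ r ∈ Set.Ico a s, G₁ r s = 0)
    (hG₀nonneg : ∀ r ∈ Set.Icc a b, 0 ≤ G₀ t r)
    (hG₀zeroafter : ∀ r ∈ Set.Ioc t b, G₀ t r = 0)
    (F₀ : Set ℝ) (hF₀ : F₀.Finite)
    (hG₀posbefore : ∀ r ∈ Set.Ico a t, r ∉ F₀ → 0 < G₀ t r) :
    (s < t → G₁ t s < G₀ t s) ∧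
    (t < s → G₁ t s = 0 ∧ G₀ t s = 0) :=
  stmt_18_general a b M₀ M₁ hM G₀ G₁ hG₀ hG₁ hres t s ht hs hG₁nonneg F₁ hF₁ hG₁posafter
    hG₁zerobefore hG₀nonneg hG₀zeroafter F₀ hF₀ hG₀posbefore
end
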